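/- For a probability distribution on {0,1}^𝒳 and subsets S = S₁ ∪ S₂ (disjoint partition) and S' ⊆ 𝒳 disjoint from S, the influence satisfies I(S→S') ≤ I(S₁→S') + I(S₂→S'). -/

import Mathlib

/-!
Hybrid argument: to change the pinning on `S₁ ∪ S₂` from `a` to `b`, first change it on `S₁`
(with `S₂` pinned to `a`) and then on `S₂` (with `S₁` pinned to `b`). Each step compares two
conditional laws admissible for `I(S₁→S')`, resp. `I(S₂→S')`, since the variables pinned outside
the changing block may be absorbed into the extra pinning `ω`; the triangle inequality for total
variation adds the two steps up.
-/

open Finset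

/-- Total variation distance between two p.m.f.s on a finite space. -/
noncomputable def tvFin {α : Type*} [Fintype α] (f g : α → ℝ) : ℝ :=
  (∑ y, |f y - g y|) / 2

/-- Merge two configurations: use `a` on `S` and `ω` off `S`. -/
def mergeConf {N : ℕ} (S : Finset (Fin N)) (a ω : Fin N → Bool) : Fin N → Bool :=
  fun j => if j ∈ S then a j else ω j

/-- The conditional law of `X_{S'}` given that the configuration agrees with `c` on `T`. -/
noncomputable def condLawSet {N : ℕ} (P : (Fin N → Bool) → ℝ) (T : Finset (Fin N))
    (c : Fin N → Bool) (S' : Finset (Fin N)) (y : {i // i ∈ S'} → Bool) : ℝ :=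
  (∑ σ ∈ Finset.univ.filter
      (fun σ : Fin N → Bool => (∀ j ∈ T, σ j = c j) ∧ ∀ i : {i // i ∈ S'}, σ i.val = y i), P σ) /
  (∑ σ ∈ Finset.univ.filter (fun σ : Fin N → Bool => ∀ j ∈ T, σ j = c j), P σ)

/-- The influence `I(S→S')`: the supremum, over pairs of configurations on `S` and over
arbitrary pinnings `ω` of variables in any subset `A ⊆ 𝒳∖S∖S'`, of the total variation
distance between the two conditional laws of `X_{S'}`. -/
noncomputable def infl {N : ℕ} (P : (Fin N → Bool) → ℝ) (S S' : Finset (Fin N)) : ℝ :=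
  ⨆ a : Fin N → Bool, ⨆ b : Fin N → Bool, ⨆ A : Finset (Fin N),
    ⨆ _ : A ⊆ ((Finset.univ \ S) \ S'), ⨆ ω : Fin N → Bool,
      tvFin (condLawSet P (S ∪ A) (mergeConf S a ω) S')
            (condLawSet P (S ∪ A) (mergeConf S b ω) S')

section Influence

variable {N : ℕ} (P : (Fin N → Bool) → ℝ)

lemma tvFin_self {α : Type*} [Fintype α] (f : α → ℝ) : tvFin f f = 0 := by
  simp [tvFin]

lemma tvFin_triangle {α : Type*} [Fintype α] (f g h : α → ℝ) :
    tvFin f g ≤ tvFin f h + tvFin h g := by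
  unfold tvFin
  rw [← add_div, ← sum_add_distrib]
  gcongr with y
  exact abs_sub_le _ _ _

lemma condLawSet_congr {T S' : Finset (Fin N)} {c c' : Fin N → Bool}
    (h : ∀ j ∈ T, c j = c' j) : condLawSet P T c S' = condLawSet P T c' S' := by
  have hpin : ∀ σ : Fin N → Bool, (∀ j ∈ T, σ j = c j) ↔ ∀ j ∈ T, σ j = c' j :=
    fun σ => forall₂_congr fun j hj => by rw [h j hj]
  funext y
  simp only [condLawSet, hpin]

lemma le_infl {S S' : Finset (Fin N)} (a b : Fin N → Bool) {A : Finset (Fin N)}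
    (hA : A ⊆ (univ \ S) \ S') (ω : Fin N → Bool) :
    tvFin (condLawSet P (S ∪ A) (mergeConf S a ω) S')
      (condLawSet P (S ∪ A) (mergeConf S b ω) S') ≤ infl P S S' := by
  refine le_ciSup_of_le ?_ a <| le_ciSup_of_le ?_ b <| le_ciSup_of_le ?_ A <|
    le_ciSup_of_le ?_ hA <| le_ciSup_of_le ?_ ω le_rfl
  all_goals exact (Set.finite_range _).bddAbove

lemma infl_nonneg (S S' : Finset (Fin N)) : 0 ≤ infl P S S' := by
  simpa [tvFin_self] using le_infl P default default (empty_subset ((univ \ S) \ S')) default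

lemma infl_le_of_forall {S S' : Finset (Fin N)} {r : ℝ} (hr : 0 ≤ r)
    (h : ∀ (a b : Fin N → Bool) (A : Finset (Fin N)), A ⊆ (univ \ S) \ S' → ∀ ω : Fin N → Bool,
      tvFin (condLawSet P (S ∪ A) (mergeConf S a ω) S')
        (condLawSet P (S ∪ A) (mergeConf S b ω) S') ≤ r) :
    infl P S S' ≤ r :=
  Real.iSup_le (fun a => Real.iSup_le (fun b => Real.iSup_le (fun A => Real.iSup_le
    (fun hA => Real.iSup_le (fun ω => h a b A hA ω) hr) hr) hr) hr) hr

lemma tvFin_condLawSet_le_infl {S S' T : Finset (Fin N)} {c c' : Fin N → Bool}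
    (hST : S ⊆ T) (hT : Disjoint (T \ S) S') (hcc' : ∀ j ∈ T \ S, c j = c' j) :
    tvFin (condLawSet P T c S') (condLawSet P T c' S') ≤ infl P S S' := by
  have hA : T \ S ⊆ (univ \ S) \ S' := fun j hj =>
    mem_sdiff.2 ⟨mem_sdiff.2 ⟨mem_univ j, (mem_sdiff.1 hj).2⟩, disjoint_left.1 hT hj⟩
  have hmerge : ∀ j ∈ T, mergeConf S c' c j = c' j := by
    intro j hj
    by_cases hjS : j ∈ S
    · simp [mergeConf, hjS]
    · simp [mergeConf, hjS, hcc' j (mem_sdiff.2 ⟨hj, hjS⟩)]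
  have h := le_infl P c c' hA c
  have hself : mergeConf S c c = c := funext fun j => by simp [mergeConf]
  rwa [union_sdiff_of_subset hST, hself, condLawSet_congr P hmerge] at h

end Influence

theorem stmt7_general {N : ℕ} (P : (Fin N → Bool) → ℝ)
    (S₁ S₂ S' : Finset (Fin N))
    (hS' : Disjoint (S₁ ∪ S₂) S') :
    infl P (S₁ ∪ S₂) S' ≤ infl P S₁ S' + infl P S₂ S' := by
  refine infl_le_of_forall P (add_nonneg (infl_nonneg P S₁ S') (infl_nonneg P S₂ S'))
    fun a b A hA ω => ?_
  set T := S₁ ∪ S₂ ∪ A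
  set c := mergeConf (S₁ ∪ S₂) a ω
  set c' := mergeConf (S₁ ∪ S₂) b ω
  set hybrid := mergeConf S₁ b c
  have hT : Disjoint T S' :=
    disjoint_union_left.2 ⟨hS', disjoint_left.2 fun j hj => (mem_sdiff.1 (hA hj)).2⟩
  have h₁ : ∀ j ∈ T \ S₁, c j = hybrid j := fun j hj => by
    simp [hybrid, mergeConf, (mem_sdiff.1 hj).2]
  have h₂ : ∀ j ∈ T \ S₂, hybrid j = c' j := fun j hj => by
    have hj₂ := (mem_sdiff.1 hj).2
    by_cases hj₁ : j ∈ S₁ <;> simp [hybrid, c, c', mergeConf, hj₁, hj₂]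
  calc tvFin (condLawSet P T c S') (condLawSet P T c' S')
      ≤ tvFin (condLawSet P T c S') (condLawSet P T hybrid S')
        + tvFin (condLawSet P T hybrid S') (condLawSet P T c' S') := tvFin_triangle _ _ _
    _ ≤ infl P S₁ S' + infl P S₂ S' := by
      gcongr
      · exact tvFin_condLawSet_le_infl P (subset_union_left.trans subset_union_left)
          (disjoint_of_subset_left sdiff_subset hT) h₁
      · exact tvFin_condLawSet_le_infl P (subset_union_right.trans subset_union_left)
          (disjoint_of_subset_left sdiff_subset hT) h₂

/-- Subadditivity of influence in the source set: `I(S₁∪S₂ → S') ≤ I(S₁→S') + I(S₂→S')`. -/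
theorem stmt7 {N : ℕ} (P : (Fin N → Bool) → ℝ)
    (hP0 : ∀ σ, 0 ≤ P σ) (hP1 : ∑ σ, P σ = 1)
    (S₁ S₂ S' : Finset (Fin N))
    (h12 : Disjoint S₁ S₂) (hS' : Disjoint (S₁ ∪ S₂) S') :
    infl P (S₁ ∪ S₂) S' ≤ infl P S₁ S' + infl P S₂ S' :=
  stmt7_general P S₁ S₂ S' hS'
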